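/- arXiv:1601.01836 — 5 statements merged into one kernel-verified Lean document; each statement's English description precedes it below -/
import Mathlib

section
/- Let J be a group with invariant length function ℓ_J and X a finite group, and let W = J ≀ X be the restricted standard wreath product with base group B = functions X → J. Define ℓ_J^X(b) = max_{x ∈ X} ℓ_J(b(x)) for b ∈ B, and ℓ_J^X(xb) = 1 for x ≠ 1 in X. Then ℓ_J^X is an invariant length function on W. -/
/-- An invariant length function on a group, valued in `[0,1]`. -/
def IsInvLength {K : Type*} [Group K] (ℓ : K → ℝ) : Prop :=
  (∀ x, 0 ≤ ℓ x) ∧ (∀ x, ℓ x ≤ 1) ∧ (∀ x, ℓ x = 0 ↔ x = 1) ∧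
  (∀ x, ℓ x⁻¹ = ℓ x) ∧ (∀ x y, ℓ (x * y) ≤ ℓ x + ℓ y) ∧
  (∀ x y, ℓ (x * y * x⁻¹) = ℓ y)

/-- The action of `X` on the base group `X → J` of the wreath product `J ≀ X`,
given by `(x • b) y = b (y * x)` (i.e. `b^x (y) = b (y x⁻¹)` rewritten as a left action). -/
def wrAct (J X : Type*) [Group J] [Group X] : X →* MulAut (X → J) where
  toFun x :=
    { toFun := fun b y => b (y * x)
      invFun := fun b y => b (y * x⁻¹)
      left_inv := fun b => by funext y; simp [mul_assoc]
      right_inv := fun b => by funext y; simp [mul_assoc]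
      map_mul' := fun b c => rfl }
  map_one' := by ext b y; simp
  map_mul' := fun x₁ x₂ => by ext b y; simp [mul_assoc]

/-- The restricted standard wreath product `J ≀ X` (with `X` finite, so the
restriction condition is vacuous). -/
abbrev Wr (J X : Type*) [Group J] [Group X] := (X → J) ⋊[wrAct J X] X

/-- The length function `ℓ_J^X` on `J ≀ X`. -/
noncomputable def wrLen {J X : Type*} [Group J] [Group X] [Fintype X] [DecidableEq X]
    (ℓJ : J → ℝ) (w : Wr J X) : ℝ :=
  if w.right = 1 then
    Finset.univ.sup' ⟨1, Finset.mem_univ 1⟩ (fun x => ℓJ (w.left x))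
  else 1

/-!
An element of `J ≀ X` outside the base group `B` has length `1`, the maximal value, so every
axiom involving such an element holds trivially, and the base group is normal, so conjugation
and products never leave `B` from inside it. It therefore suffices that the sup-length
`b ↦ max_x ℓ_J (b x)` is an invariant length on `B = X → J`, which holds pointwise, and is
unchanged by the shifts `b ↦ b (· * x)` through which `X` acts.
-/

namespace SemidirectProduct

variable {N G : Type*} [Group N] [Group G] {φ : G →* MulAut N}

lemma left_mul_of_right_eq_one {w : N ⋊[φ] G} (hw : w.right = 1) (v : N ⋊[φ] G) :
    (w * v).left = w.left * v.left := by
  rw [mul_left, hw, map_one, MulAut.one_apply]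

lemma left_inv_of_right_eq_one {w : N ⋊[φ] G} (hw : w.right = 1) :
    w⁻¹.left = w.left⁻¹ := by
  rw [inv_left, hw, inv_one, map_one, MulAut.one_apply]

lemma left_conj_of_right_eq_one (x : N ⋊[φ] G) {y : N ⋊[φ] G} (hy : y.right = 1) :
    (x * y * x⁻¹).left = x.left * φ x.right y.left * x.left⁻¹ := by
  simp only [mul_left, mul_right, inv_left, hy, mul_one, ← MulAut.mul_apply, ← map_mul,
    mul_inv_cancel, map_one, MulAut.one_apply]

variable [DecidableEq G]

def extendLen (ℓ : N → ℝ) (w : N ⋊[φ] G) : ℝ :=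
  if w.right = 1 then ℓ w.left else 1

variable {ℓ : N → ℝ}

lemma extendLen_of_right_eq_one {w : N ⋊[φ] G} (hw : w.right = 1) :
    extendLen ℓ w = ℓ w.left :=
  if_pos hw

lemma extendLen_of_right_ne_one {w : N ⋊[φ] G} (hw : w.right ≠ 1) : extendLen ℓ w = 1 :=
  if_neg hw

theorem isInvLength_extendLen (hℓ : IsInvLength ℓ) (hφ : ∀ g n, ℓ (φ g n) = ℓ n) :
    IsInvLength (extendLen (φ := φ) ℓ) := by
  obtain ⟨h0, h1, he, hi, hs, hc⟩ := hℓ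
  have nonneg (w : N ⋊[φ] G) : 0 ≤ extendLen ℓ w := by
    unfold extendLen; split_ifs <;> simp [h0]
  have le_one (w : N ⋊[φ] G) : extendLen ℓ w ≤ 1 := by
    unfold extendLen; split_ifs <;> simp [h1]
  refine ⟨nonneg, le_one, fun w => ?_, fun w => ?_, fun w v => ?_, fun x y => ?_⟩
  · by_cases hw : w.right = 1
    · rw [extendLen_of_right_eq_one hw, he, SemidirectProduct.ext_iff, hw]
      simp
    · rw [extendLen_of_right_ne_one hw]
      exact iff_of_false one_ne_zero fun h => hw (h ▸ rfl)
  · by_cases hw : w.right = 1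
    · have hw' : w⁻¹.right = 1 := by rw [inv_right, hw, inv_one]
      rw [extendLen_of_right_eq_one hw, extendLen_of_right_eq_one hw',
        left_inv_of_right_eq_one hw, hi]
    · have hw' : w⁻¹.right ≠ 1 := by rwa [inv_right, inv_ne_one]
      rw [extendLen_of_right_ne_one hw, extendLen_of_right_ne_one hw']
  · by_cases hw : w.right = 1
    · by_cases hv : v.right = 1
      · have hwv : (w * v).right = 1 := by rw [mul_right, hw, hv, one_mul]
        rw [extendLen_of_right_eq_one hw, extendLen_of_right_eq_one hv,
          extendLen_of_right_eq_one hwv, left_mul_of_right_eq_one hw]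
        exact hs _ _
      · linarith [le_one (w * v), nonneg w, extendLen_of_right_ne_one (ℓ := ℓ) hv]
    · linarith [le_one (w * v), nonneg v, extendLen_of_right_ne_one (ℓ := ℓ) hw]
  · have hxy : (x * y * x⁻¹).right = 1 ↔ y.right = 1 := by
      rw [mul_right, mul_right, inv_right, conj_eq_one_iff]
    by_cases hy : y.right = 1
    · rw [extendLen_of_right_eq_one hy, extendLen_of_right_eq_one (hxy.2 hy),
        left_conj_of_right_eq_one x hy, hc, hφ]
    · rw [extendLen_of_right_ne_one hy, extendLen_of_right_ne_one (mt hxy.1 hy)]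

end SemidirectProduct

section SupLen

variable {ι J : Type*} [Fintype ι] [Nonempty ι]

noncomputable def supLen (ℓ : J → ℝ) (b : ι → J) : ℝ :=
  Finset.univ.sup' Finset.univ_nonempty fun i => ℓ (b i)

lemma le_supLen (ℓ : J → ℝ) (b : ι → J) (i : ι) : ℓ (b i) ≤ supLen ℓ b :=
  Finset.le_sup' (fun i => ℓ (b i)) (Finset.mem_univ i)

lemma supLen_le_iff {ℓ : J → ℝ} {b : ι → J} {a : ℝ} : supLen ℓ b ≤ a ↔ ∀ i, ℓ (b i) ≤ a := by
  simp [supLen, Finset.sup'_le_iff]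

lemma supLen_comp_equiv (ℓ : J → ℝ) (b : ι → J) (e : ι ≃ ι) :
    supLen ℓ (b ∘ e) = supLen ℓ b :=
  le_antisymm (supLen_le_iff.2 fun i => le_supLen ℓ b (e i))
    (supLen_le_iff.2 fun i => by simpa using le_supLen ℓ (b ∘ e) (e.symm i))

theorem isInvLength_supLen [Group J] {ℓ : J → ℝ} (hℓ : IsInvLength ℓ) :
    IsInvLength (supLen (ι := ι) ℓ) := by
  obtain ⟨h0, h1, he, hi, hs, hc⟩ := hℓ
  have hsup_congr {b c : ι → J} (h : ∀ i, ℓ (b i) = ℓ (c i)) : supLen ℓ b = supLen ℓ c := by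
    simp only [supLen, h]
  refine ⟨fun b => ?_, fun b => supLen_le_iff.2 fun i => h1 _, fun b => ?_,
    fun b => hsup_congr fun i => hi _, fun b c => ?_, fun b c => hsup_congr fun i => hc _ _⟩
  · exact (h0 _).trans (le_supLen ℓ b (Classical.arbitrary ι))
  · refine ⟨fun hb => funext fun i => (he _).1 ?_, fun hb => ?_⟩
    · exact le_antisymm (hb ▸ le_supLen ℓ b i) (h0 _)
    · subst hb
      exact le_antisymm (supLen_le_iff.2 fun i => ((he 1).2 rfl).le)
        ((h0 _).trans (le_supLen ℓ 1 (Classical.arbitrary ι)))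
  · exact supLen_le_iff.2 fun i =>
      (hs _ _).trans (add_le_add (le_supLen ℓ b i) (le_supLen ℓ c i))

end SupLen

theorem stmt_6 {J X : Type*} [Group J] [Group X] [Fintype X] [DecidableEq X]
    (ℓJ : J → ℝ) (hJ : IsInvLength ℓJ) :
    IsInvLength (wrLen (X := X) ℓJ) :=
  -- `wrLen ℓJ` unfolds to `extendLen (supLen ℓJ)`
  SemidirectProduct.isInvLength_extendLen (isInvLength_supLen hJ) fun x b =>
    supLen_comp_equiv ℓJ b (Equiv.mulRight x)
end

section
/- Let K be a group with invariant length function ℓ_K and A a nonempty finite set. On the permutation wreath product W = Sym(A) ⋉ B, where B is the group of functions A → K, the function ℓ̂_K^A((α,b)) = (1/|A|)(Σ_{a: α(a)=a} ℓ_K(b(a)) + Σ_{a: α(a)≠a} 1) is an invariant length function on W. -/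
/-- The action of `Sym(A)` on the base group `A → K` of the permutation wreath
product, given by `(α • b) a = b (α⁻¹ a)`. -/
def permWrAct (K A : Type*) [Group K] : Equiv.Perm A →* MulAut (A → K) where
  toFun α :=
    { toFun := fun b a => b (α⁻¹ a)
      invFun := fun b a => b (α a)
      left_inv := fun b => by funext a; simp
      right_inv := fun b => by funext a; simp
      map_mul' := fun b c => rfl }
  map_one' := by ext b a; simp
  map_mul' := fun α₁ α₂ => by ext b a; simp

/-- The permutation wreath product `K ≀ Sym(A) = Sym(A) ⋉ (A → K)`. -/
abbrev PermWr (K A : Type*) [Group K] := (A → K) ⋊[permWrAct K A] Equiv.Perm A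

/-- The length function `ℓ̂_K^A` on the permutation wreath product. -/
noncomputable def permWrLen {K A : Type*} [Group K] [Fintype A] [DecidableEq A]
    (ℓK : K → ℝ) (w : PermWr K A) : ℝ :=
  (1 / (Fintype.card A : ℝ)) *
    ∑ a : A, if w.right a = a then ℓK (w.left a) else 1

/-! `permWrLen ℓK w` is the average over `a : A` of a summand that is `ℓK (w.left a)` when
`w.right` fixes `a` and `1` otherwise, so every axiom can be checked summand by summand.
For `x * y`, the `y`-sum is first reindexed by `x.right⁻¹`: the summand of `x * y` at `a` only
involves `x` at `a` and `y` at `x.right⁻¹ a`. Subadditivity then comes from the triangle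
inequality for `ℓK` at common fixed points (and the bound `1` elsewhere), and conjugation
invariance from `ℓK (g * h) = ℓK (h * g)`, which is equivalent to it. -/

theorem conj_invariant_iff_mul_comm {G β : Type*} [Group G] {f : G → β} :
    (∀ x y, f (x * y * x⁻¹) = f y) ↔ ∀ x y, f (x * y) = f (y * x) := by
  constructor
  · intro h x y
    have hyx := h y (x * y)
    rw [← mul_assoc, mul_inv_cancel_right] at hyx
    exact hyx.symm
  · intro h x y
    rw [mul_assoc, h, inv_mul_cancel_right]

namespace PermWr

variable {K A : Type*} [Group K]

theorem mul_left_apply (x y : PermWr K A) (a : A) :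
    (x * y).left a = x.left a * y.left (x.right⁻¹ a) := rfl

theorem inv_left_apply (x : PermWr K A) (a : A) :
    x⁻¹.left a = (x.left (x.right a))⁻¹ := rfl

theorem eq_one_iff (w : PermWr K A) : w = 1 ↔ ∀ a, w.right a = a ∧ w.left a = 1 := by
  simp only [SemidirectProduct.ext_iff, Equiv.ext_iff, funext_iff, forall_and]
  exact and_comm

end PermWr

section Summand

open PermWr

variable {K A : Type*} [Group K] [DecidableEq A] {ℓK : K → ℝ}

def permWrSummand (ℓK : K → ℝ) (w : PermWr K A) (a : A) : ℝ :=
  if w.right a = a then ℓK (w.left a) else 1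

theorem permWrSummand_of_fixed {w : PermWr K A} {a : A} (h : w.right a = a) :
    permWrSummand ℓK w a = ℓK (w.left a) := if_pos h

theorem permWrSummand_of_not_fixed {w : PermWr K A} {a : A} (h : w.right a ≠ a) :
    permWrSummand ℓK w a = 1 := if_neg h

theorem permWrSummand_nonneg (h0 : ∀ x, 0 ≤ ℓK x) (w : PermWr K A) (a : A) :
    0 ≤ permWrSummand ℓK w a := by
  unfold permWrSummand; split
  · exact h0 _
  · exact zero_le_one

theorem permWrSummand_le_one (h1 : ∀ x, ℓK x ≤ 1) (w : PermWr K A) (a : A) :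
    permWrSummand ℓK w a ≤ 1 := by
  unfold permWrSummand; split
  · exact h1 _
  · exact le_rfl

theorem permWrSummand_eq_zero_iff (hzero : ∀ x, ℓK x = 0 ↔ x = 1) (w : PermWr K A) (a : A) :
    permWrSummand ℓK w a = 0 ↔ w.right a = a ∧ w.left a = 1 := by
  unfold permWrSummand; split
  · simp_all
  · simp_all

theorem permWrSummand_inv (hinv : ∀ x, ℓK x⁻¹ = ℓK x) (w : PermWr K A) (a : A) :
    permWrSummand ℓK w⁻¹ a = permWrSummand ℓK w a := by
  have hfix : w⁻¹.right a = a ↔ w.right a = a := by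
    rw [SemidirectProduct.inv_right, Equiv.Perm.inv_eq_iff_eq, eq_comm]
  by_cases h : w.right a = a
  · rw [permWrSummand_of_fixed h, permWrSummand_of_fixed (hfix.mpr h), inv_left_apply, h, hinv]
  · rw [permWrSummand_of_not_fixed h, permWrSummand_of_not_fixed (mt hfix.mp h)]

theorem permWrSummand_mul_le (h0 : ∀ x, 0 ≤ ℓK x) (h1 : ∀ x, ℓK x ≤ 1)
    (htri : ∀ x y, ℓK (x * y) ≤ ℓK x + ℓK y) (x y : PermWr K A) (a : A) :
    permWrSummand ℓK (x * y) a ≤ permWrSummand ℓK x a + permWrSummand ℓK y (x.right⁻¹ a) := by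
  by_cases hx : x.right a = a
  · have hxi : x.right⁻¹ a = a := by rw [Equiv.Perm.inv_eq_iff_eq, hx]
    rw [hxi]
    by_cases hy : y.right a = a
    · have hxy : (x * y).right a = a := by
        rw [SemidirectProduct.mul_right, Equiv.Perm.mul_apply, hy, hx]
      rw [permWrSummand_of_fixed hxy, permWrSummand_of_fixed hx, permWrSummand_of_fixed hy,
        mul_left_apply, hxi]
      exact htri _ _
    · rw [permWrSummand_of_not_fixed hy]
      linarith [permWrSummand_le_one h1 (x * y) a, permWrSummand_nonneg h0 x a]
  · rw [permWrSummand_of_not_fixed hx]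
    linarith [permWrSummand_le_one h1 (x * y) a, permWrSummand_nonneg h0 y (x.right⁻¹ a)]

theorem permWrSummand_mul_comm (hcomm : ∀ x y, ℓK (x * y) = ℓK (y * x)) (x y : PermWr K A)
    (a : A) : permWrSummand ℓK (x * y) a = permWrSummand ℓK (y * x) (x.right⁻¹ a) := by
  have hfix : (y * x).right (x.right⁻¹ a) = x.right⁻¹ a ↔ (x * y).right a = a := by
    simp only [SemidirectProduct.mul_right, Equiv.Perm.mul_apply, Equiv.Perm.coe_inv, Equiv.apply_symm_apply,
      Equiv.eq_symm_apply]
  by_cases h : (x * y).right a = a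
  · have hya : y.right⁻¹ (x.right⁻¹ a) = a := by
      rw [← Equiv.Perm.mul_apply, ← mul_inv_rev, ← SemidirectProduct.mul_right,
        Equiv.Perm.inv_eq_iff_eq, h]
    rw [permWrSummand_of_fixed h, permWrSummand_of_fixed (hfix.mpr h), mul_left_apply,
      mul_left_apply, hya, hcomm]
  · rw [permWrSummand_of_not_fixed h, permWrSummand_of_not_fixed (mt hfix.mp h)]

end Summand

section Length

variable {K A : Type*} [Group K] [Fintype A] [DecidableEq A] {ℓK : K → ℝ}

theorem permWrLen_eq (w : PermWr K A) :
    permWrLen ℓK w = (1 / (Fintype.card A : ℝ)) * ∑ a, permWrSummand ℓK w a := rfl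

theorem permWrLen_nonneg (h0 : ∀ x, 0 ≤ ℓK x) (w : PermWr K A) : 0 ≤ permWrLen ℓK w := by
  rw [permWrLen_eq]
  exact mul_nonneg (by positivity) (Finset.sum_nonneg fun a _ => permWrSummand_nonneg h0 w a)

theorem permWrLen_le_one (h1 : ∀ x, ℓK x ≤ 1) (w : PermWr K A) : permWrLen ℓK w ≤ 1 := by
  have hsum : ∑ a, permWrSummand ℓK w a ≤ Fintype.card A := by
    simpa using Finset.sum_le_sum fun a (_ : a ∈ Finset.univ) => permWrSummand_le_one h1 w a
  calc permWrLen ℓK w ≤ (1 / (Fintype.card A : ℝ)) * Fintype.card A := by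
        rw [permWrLen_eq]; gcongr
    _ ≤ 1 := by rw [one_div_mul_eq_div]; exact div_self_le_one _

theorem permWrLen_eq_zero_iff_forall (h0 : ∀ x, 0 ≤ ℓK x) (w : PermWr K A) :
    permWrLen ℓK w = 0 ↔ ∀ a, permWrSummand ℓK w a = 0 := by
  rw [permWrLen_eq, mul_eq_zero,
    Finset.sum_eq_zero_iff_of_nonneg fun a _ => permWrSummand_nonneg h0 w a]
  constructor
  · rintro (hcard | hsum) a
    · have : Nonempty A := ⟨a⟩
      simp at hcard
    · exact hsum a (Finset.mem_univ a)
  · exact fun h => Or.inr fun a _ => h a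

theorem permWrLen_eq_zero_iff (h0 : ∀ x, 0 ≤ ℓK x) (hzero : ∀ x, ℓK x = 0 ↔ x = 1)
    (w : PermWr K A) : permWrLen ℓK w = 0 ↔ w = 1 := by
  simp only [permWrLen_eq_zero_iff_forall h0, permWrSummand_eq_zero_iff hzero, PermWr.eq_one_iff]

theorem permWrLen_inv (hinv : ∀ x, ℓK x⁻¹ = ℓK x) (w : PermWr K A) :
    permWrLen ℓK w⁻¹ = permWrLen ℓK w := by
  simp only [permWrLen_eq, permWrSummand_inv hinv]

theorem permWrLen_mul_le (h0 : ∀ x, 0 ≤ ℓK x) (h1 : ∀ x, ℓK x ≤ 1)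
    (htri : ∀ x y, ℓK (x * y) ≤ ℓK x + ℓK y) (x y : PermWr K A) :
    permWrLen ℓK (x * y) ≤ permWrLen ℓK x + permWrLen ℓK y := by
  simp only [permWrLen_eq, ← mul_add]
  gcongr
  rw [← Equiv.sum_comp x.right⁻¹ (permWrSummand ℓK y), ← Finset.sum_add_distrib]
  exact Finset.sum_le_sum fun a _ => permWrSummand_mul_le h0 h1 htri x y a

theorem permWrLen_mul_comm (hcomm : ∀ x y, ℓK (x * y) = ℓK (y * x)) (x y : PermWr K A) :
    permWrLen ℓK (x * y) = permWrLen ℓK (y * x) := by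
  rw [permWrLen_eq, permWrLen_eq, ← Equiv.sum_comp x.right⁻¹ (permWrSummand ℓK (y * x))]
  exact congrArg _ (Finset.sum_congr rfl fun a _ => permWrSummand_mul_comm hcomm x y a)

end Length

theorem stmt_8_general {K A : Type*} [Group K] [Fintype A] [DecidableEq A]
    (ℓK : K → ℝ) (hK : IsInvLength ℓK) :
    IsInvLength (permWrLen (A := A) ℓK) := by
  obtain ⟨h0, h1, hzero, hinv, htri, hconj⟩ := hK
  exact ⟨permWrLen_nonneg h0, permWrLen_le_one h1, permWrLen_eq_zero_iff h0 hzero,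
    permWrLen_inv hinv, permWrLen_mul_le h0 h1 htri,
    conj_invariant_iff_mul_comm.mpr (permWrLen_mul_comm (conj_invariant_iff_mul_comm.mp hconj))⟩

theorem stmt_8 {K A : Type*} [Group K] [Fintype A] [DecidableEq A] [Nonempty A]
    (ℓK : K → ℝ) (hK : IsInvLength ℓK) :
    IsInvLength (permWrLen (A := A) ℓK) :=
  stmt_8_general ℓK hK
end

section
/- Let g₁, g₂ be n×n unitary matrices and let ℓ(g) = (1/2)·(Tr((g−I)*(g−I))/n)^{1/2} denote half the normalized Hilbert–Schmidt distance from the identity. If ℓ(g₁) > 1−ε and ℓ(g₂) > 1−ε for some ε with 0 < ε < 1, then ℓ(g₁g₂) < 2√(2ε). -/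
/-
By the parallelogram identity `‖g - 1‖² + ‖g + 1‖² = 4` for unitary `g`, a length `ℓ(g) > 1 - ε`
forces `‖g + 1‖² < 8ε`: such a `g` is close to `-1`. Since
`g₁g₂ - 1 = (g₁ + 1)g₂ - (g₂ + 1)` and the Hilbert–Schmidt norm is invariant under right
multiplication by unitaries, the triangle inequality gives
`2ℓ(g₁g₂) ≤ ‖g₁ + 1‖ + ‖g₂ + 1‖ < 2√(8ε)`.
-/

open Matrix

/-- The normalized Hilbert–Schmidt norm of an `n × n` complex matrix. -/
noncomputable def hsNorm (n : ℕ) (A : Matrix (Fin n) (Fin n) ℂ) : ℝ :=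
  Real.sqrt ((Aᴴ * A).trace.re / n)

/-- The length function `ℓ(g) = (1/2) ‖g - I‖_HS` on the unitary group. -/
noncomputable def hsLen (n : ℕ) (g : Matrix (Fin n) (Fin n) ℂ) : ℝ :=
  (1 / 2) * hsNorm n (g - 1)

attribute [local instance] Matrix.frobeniusNormedAddCommGroup

lemma re_trace_conjTranspose_mul_self {m k 𝕜 : Type*} [Fintype m] [Fintype k] [RCLike 𝕜]
    (A : Matrix m k 𝕜) : RCLike.re (Aᴴ * A).trace = ‖A‖ ^ 2 := by
  rw [frobenius_norm_def, ← Real.sqrt_eq_rpow, Real.sq_sqrt (by positivity), Finset.sum_comm]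
  simp only [trace, diag, mul_apply, conjTranspose_apply, map_sum, RCLike.star_def,
    RCLike.conj_mul, ← RCLike.ofReal_pow, RCLike.ofReal_re, Real.rpow_two]

lemma hsNorm_sq {n : ℕ} (A : Matrix (Fin n) (Fin n) ℂ) :
    hsNorm n A ^ 2 = (Aᴴ * A).trace.re / n := by
  rw [hsNorm, Real.sq_sqrt]
  rw [← RCLike.re_to_complex, re_trace_conjTranspose_mul_self]
  positivity

lemma hsNorm_nonneg (n : ℕ) (A : Matrix (Fin n) (Fin n) ℂ) : 0 ≤ hsNorm n A :=
  Real.sqrt_nonneg _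

lemma hsNorm_eq_norm_div_sqrt {n : ℕ} (A : Matrix (Fin n) (Fin n) ℂ) :
    hsNorm n A = ‖A‖ / Real.sqrt n := by
  rw [hsNorm, Real.sqrt_div' _ n.cast_nonneg, ← RCLike.re_to_complex,
    re_trace_conjTranspose_mul_self, Real.sqrt_sq (norm_nonneg A)]

lemma hsNorm_sub_le {n : ℕ} (A B : Matrix (Fin n) (Fin n) ℂ) :
    hsNorm n (A - B) ≤ hsNorm n A + hsNorm n B := by
  simp only [hsNorm_eq_norm_div_sqrt, ← add_div]
  gcongr
  exact norm_sub_le A B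

lemma hsNorm_mul_of_conjTranspose_mul_self_eq_one {n : ℕ} (A g : Matrix (Fin n) (Fin n) ℂ)
    (hg : gᴴ * g = 1) : hsNorm n (A * g) = hsNorm n A := by
  have hg' : g * gᴴ = 1 := mul_eq_one_comm.mp hg
  rw [hsNorm, hsNorm, conjTranspose_mul, Matrix.mul_assoc, trace_mul_comm]
  simp only [Matrix.mul_assoc, hg', Matrix.mul_one]

lemma hsNorm_sub_sq_add_hsNorm_add_sq {n : ℕ} (hn : 0 < n) (g h : Matrix (Fin n) (Fin n) ℂ)
    (hg : gᴴ * g = 1) (hh : hᴴ * h = 1) :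
    hsNorm n (g - h) ^ 2 + hsNorm n (g + h) ^ 2 = 4 := by
  have hsum : (g - h)ᴴ * (g - h) + (g + h)ᴴ * (g + h) = (4 : ℂ) • 1 := calc
    _ = (2 : ℂ) • (gᴴ * g + hᴴ * h) := by
      simp only [conjTranspose_sub, conjTranspose_add, smul_add, two_smul]
      noncomm_ring
    _ = (4 : ℂ) • 1 := by rw [hg, hh]; module
  rw [hsNorm_sq, hsNorm_sq, ← add_div, ← Complex.add_re, ← trace_add, hsum, trace_smul,
    trace_one, Fintype.card_fin, smul_eq_mul]
  norm_num [hn.ne']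

lemma hsNorm_add_one_lt_of_lt_hsLen {n : ℕ} (hn : 0 < n) {g : Matrix (Fin n) (Fin n) ℂ}
    (hg : gᴴ * g = 1) {ε : ℝ} (hlen : 1 - ε < hsLen n g) :
    hsNorm n (g + 1) < 2 * Real.sqrt (2 * ε) := by
  have hpar := hsNorm_sub_sq_add_hsNorm_add_sq hn g 1 hg (by simp)
  rw [hsLen] at hlen
  -- `‖g - 1‖² > 4(1 - ε)² ≥ 4 - 8ε` if `ε ≤ 1`, and `‖g + 1‖² ≤ 4 < 8ε` otherwise
  have hsq : hsNorm n (g + 1) ^ 2 < 8 * ε := by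
    nlinarith [hsNorm_nonneg n (g - 1)]
  have hsqrt : Real.sqrt (8 * ε) = 2 * Real.sqrt (2 * ε) := by
    rw [show 8 * ε = 2 ^ 2 * (2 * ε) by ring, Real.sqrt_mul (sq_nonneg 2),
      Real.sqrt_sq zero_le_two]
  rwa [← hsqrt, Real.lt_sqrt (hsNorm_nonneg n (g + 1))]

theorem stmt_10_general {n : ℕ} (hn : 0 < n) (g₁ g₂ : Matrix (Fin n) (Fin n) ℂ)
    (hg₁ : g₁ᴴ * g₁ = 1) (hg₂ : g₂ᴴ * g₂ = 1)
    (ε : ℝ) (h₁ : 1 - ε < hsLen n g₁) (h₂ : 1 - ε < hsLen n g₂) :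
    hsLen n (g₁ * g₂) < 2 * Real.sqrt (2 * ε) := by
  have hdecomp : g₁ * g₂ - 1 = (g₁ + 1) * g₂ - (g₂ + 1) := by noncomm_ring
  have htri := hsNorm_sub_le ((g₁ + 1) * g₂) (g₂ + 1)
  rw [hsNorm_mul_of_conjTranspose_mul_self_eq_one _ _ hg₂, ← hdecomp] at htri
  rw [hsLen]
  linarith [hsNorm_add_one_lt_of_lt_hsLen hn hg₁ h₁, hsNorm_add_one_lt_of_lt_hsLen hn hg₂ h₂]

theorem stmt_10 {n : ℕ} (hn : 0 < n) (g₁ g₂ : Matrix (Fin n) (Fin n) ℂ)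
    (hg₁ : g₁ᴴ * g₁ = 1) (hg₂ : g₂ᴴ * g₂ = 1)
    (ε : ℝ) (hε0 : 0 < ε) (hε1 : ε < 1)
    (h₁ : 1 - ε < hsLen n g₁) (h₂ : 1 - ε < hsLen n g₂) :
    hsLen n (g₁ * g₂) < 2 * Real.sqrt (2 * ε) :=
  stmt_10_general hn g₁ g₂ hg₁ hg₂ ε h₁ h₂
end

section
/- Let C be a class of groups with invariant length functions such that for some fixed p ≥ 1, whenever (J,ℓ_J), (K,ℓ_K) ∈ C, also (J × K, L^p) ∈ C, where L^p(x,y) = ((ℓ_J(x)^p + ℓ_K(y)^p)/2)^{1/p}. Then the direct product of two C-approximable groups is C-approximable. -/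
/-- A weight function on a group `G`. -/
def IsWeight {G : Type*} [Group G] (δ : G → ℝ) : Prop :=
  δ 1 = 0 ∧ ∀ g : G, g ≠ 1 → 0 < δ g ∧ δ g ≤ 1

/-- `φ : G → K` is an `(F, ε, δ, ℓK)`-quasi-homomorphism. -/
def QuasiHom {G K : Type*} [Group G] [Group K] (F : Finset G) (ε : ℝ)
    (δ : G → ℝ) (ℓK : K → ℝ) (φ : G → K) : Prop :=
  φ 1 = 1 ∧
  (∀ g ∈ F, ∀ h ∈ F, ℓK (φ (g * h) * (φ h)⁻¹ * (φ g)⁻¹) ≤ ε) ∧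
  (∀ g ∈ F, g ≠ 1 → δ g ≤ ℓK (φ g))

/-- A group `G` is approximable by the class `𝒞 = {(K i, ℓ i)}`. -/
def CApprox {ι : Type*} (K : ι → Type*) [∀ i, Group (K i)]
    (ℓ : ∀ i, K i → ℝ) (G : Type*) [Group G] : Prop :=
  ∃ δ : G → ℝ, IsWeight δ ∧
    ∀ ε : ℝ, 0 < ε → ∀ F : Finset G,
      ∃ i : ι, ∃ φ : G → K i, QuasiHom F ε δ (ℓ i) φ

/-!
Approximate `G` and `H` on the projections of a finite set by `φ : G → K i` and
`ψ : H → K j`, and take `(g, h) ↦ e (φ g, ψ h)` with `e : K i × K j ≃* K k` from the closure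
hypothesis. The defect of this map is the image under `e` of the pair of defects, so the
`L^p`-mean bounds it by the mean of `ε` with itself, which is `ε`; the same mean of the two
weights is a weight on `G × H` that the map respects.
-/

noncomputable def lpMean (p : ℕ) (a b : ℝ) : ℝ :=
  ((a ^ p + b ^ p) / 2) ^ ((p : ℝ)⁻¹)

section LpMean

variable {p : ℕ} {a b a' b' : ℝ}

lemma lpMean_le_lpMean (ha : 0 ≤ a) (hb : 0 ≤ b) (haa : a ≤ a') (hbb : b ≤ b') :
    lpMean p a b ≤ lpMean p a' b' := by
  unfold lpMean
  gcongr

lemma lpMean_self (hp : p ≠ 0) (ha : 0 ≤ a) : lpMean p a a = a := by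
  rw [lpMean, add_self_div_two, ← Real.rpow_natCast, ← Real.rpow_mul ha,
    mul_inv_cancel₀ (Nat.cast_ne_zero.mpr hp), Real.rpow_one]

lemma lpMean_pos (ha : 0 ≤ a) (hb : 0 ≤ b) (hab : 0 < a ∨ 0 < b) : 0 < lpMean p a b := by
  unfold lpMean
  have hsum : 0 < a ^ p + b ^ p := by
    rcases hab with ha' | hb'
    · exact add_pos_of_pos_of_nonneg (pow_pos ha' p) (pow_nonneg hb p)
    · exact add_pos_of_nonneg_of_pos (pow_nonneg ha p) (pow_pos hb' p)
  positivity

end LpMean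

namespace IsWeight

variable {G H : Type*} [Group G] [Group H] {δ : G → ℝ}

lemma nonneg (hδ : IsWeight δ) (g : G) : 0 ≤ δ g := by
  by_cases hg : g = 1
  · exact hg ▸ hδ.1.ge
  · exact (hδ.2 g hg).1.le

lemma le_one (hδ : IsWeight δ) (g : G) : δ g ≤ 1 := by
  by_cases hg : g = 1
  · rw [hg, hδ.1]
    exact zero_le_one
  · exact (hδ.2 g hg).2

lemma prod {p : ℕ} {δ' : H → ℝ} (hδ : IsWeight δ) (hδ' : IsWeight δ') (hp : p ≠ 0) :
    IsWeight fun x : G × H => lpMean p (δ x.1) (δ' x.2) := by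
  refine ⟨by simp only [Prod.fst_one, Prod.snd_one, hδ.1, hδ'.1, lpMean_self hp le_rfl],
    fun x hx => ⟨?_, ?_⟩⟩
  · have hne : x.1 ≠ 1 ∨ x.2 ≠ 1 := by
      by_contra! h
      exact hx (Prod.ext h.1 h.2)
    exact lpMean_pos (hδ.nonneg _) (hδ'.nonneg _)
      (hne.imp (fun h => (hδ.2 _ h).1) (fun h => (hδ'.2 _ h).1))
  · calc lpMean p (δ x.1) (δ' x.2) ≤ lpMean p 1 1 :=
          lpMean_le_lpMean (hδ.nonneg _) (hδ'.nonneg _) (hδ.le_one _) (hδ'.le_one _)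
      _ = 1 := lpMean_self hp zero_le_one

end IsWeight

namespace QuasiHom

variable {G H K₁ K₂ K : Type*} [Group G] [Group H] [Group K₁] [Group K₂] [Group K]
  [DecidableEq G] [DecidableEq H]
  {F : Finset (G × H)} {ε : ℝ} {δ : G → ℝ} {δ' : H → ℝ}
  {ℓ₁ : K₁ → ℝ} {ℓ₂ : K₂ → ℝ} {ℓ : K → ℝ} {φ : G → K₁} {ψ : H → K₂}

lemma prod {p : ℕ} (hφ : QuasiHom (F.image Prod.fst) ε δ ℓ₁ φ)
    (hψ : QuasiHom (F.image Prod.snd) ε δ' ℓ₂ ψ) (e : K₁ × K₂ →* K)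
    (he : ∀ z, ℓ (e z) = lpMean p (ℓ₁ z.1) (ℓ₂ z.2)) (hp : p ≠ 0) (hε : 0 ≤ ε)
    (hδ : IsWeight δ) (hδ' : IsWeight δ') (hℓ₁ : ∀ x, 0 ≤ ℓ₁ x) (hℓ₂ : ∀ x, 0 ≤ ℓ₂ x) :
    QuasiHom F ε (fun x => lpMean p (δ x.1) (δ' x.2)) ℓ (fun x => e (φ x.1, ψ x.2)) := by
  obtain ⟨hφ1, hφdef, hφδ⟩ := hφ
  obtain ⟨hψ1, hψdef, hψδ⟩ := hψ
  refine ⟨by simp only [Prod.fst_one, Prod.snd_one, hφ1, hψ1, Prod.mk_one_one, map_one],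
    fun x hx y hy => ?_, fun x hx _ => ?_⟩
  · have hdefect : e (φ (x * y).1, ψ (x * y).2) * (e (φ y.1, ψ y.2))⁻¹ * (e (φ x.1, ψ x.2))⁻¹ =
        e (φ (x.1 * y.1) * (φ y.1)⁻¹ * (φ x.1)⁻¹, ψ (x.2 * y.2) * (ψ y.2)⁻¹ * (ψ x.2)⁻¹) := by
      simp only [← map_inv, ← map_mul]
      rfl
    rw [hdefect, he]
    calc _ ≤ lpMean p ε ε := lpMean_le_lpMean (hℓ₁ _) (hℓ₂ _)
          (hφdef _ (F.mem_image_of_mem _ hx) _ (F.mem_image_of_mem _ hy))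
          (hψdef _ (F.mem_image_of_mem _ hx) _ (F.mem_image_of_mem _ hy))
      _ = ε := lpMean_self hp hε
  · have hfst : δ x.1 ≤ ℓ₁ (φ x.1) := by
      by_cases h : x.1 = 1
      · simpa only [h, hδ.1, hφ1] using hℓ₁ 1
      · exact hφδ _ (F.mem_image_of_mem _ hx) h
    have hsnd : δ' x.2 ≤ ℓ₂ (ψ x.2) := by
      by_cases h : x.2 = 1
      · simpa only [h, hδ'.1, hψ1] using hℓ₂ 1
      · exact hψδ _ (F.mem_image_of_mem _ hx) h
    rw [he]
    exact lpMean_le_lpMean (hδ.nonneg _) (hδ'.nonneg _) hfst hsnd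

end QuasiHom

theorem stmt_15 {ι : Type*} (K : ι → Type*) [∀ i, Group (K i)]
    (ℓ : ∀ i, K i → ℝ) (hℓ : ∀ i, IsInvLength (ℓ i))
    (p : ℕ) (hp : 1 ≤ p)
    (hclosed : ∀ i j : ι, ∃ k : ι, ∃ e : K i × K j ≃* K k,
      ∀ z : K i × K j,
        ℓ k (e z) = ((ℓ i z.1 ^ p + ℓ j z.2 ^ p) / 2) ^ ((p : ℝ)⁻¹))
    (G H : Type*) [Group G] [Group H]
    (hG : CApprox K ℓ G) (hH : CApprox K ℓ H) :
    CApprox K ℓ (G × H) := by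
  classical
  have hp0 : p ≠ 0 := Nat.one_le_iff_ne_zero.mp hp
  obtain ⟨δG, hδG, hGapprox⟩ := hG
  obtain ⟨δH, hδH, hHapprox⟩ := hH
  refine ⟨_, hδG.prod hδH hp0, fun ε hε F => ?_⟩
  obtain ⟨i, φ, hφ⟩ := hGapprox ε hε (F.image Prod.fst)
  obtain ⟨j, ψ, hψ⟩ := hHapprox ε hε (F.image Prod.snd)
  obtain ⟨k, e, he⟩ := hclosed i j
  exact ⟨k, _, hφ.prod hψ e.toMonoidHom he hp0 hε.le hδG hδH (hℓ i).1 (hℓ j).1⟩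
end

section
/- Let σ ∈ Sym(Y) where Y = X^M is the set of functions from a finite set M (|M| = m ≥ 1) to a finite set X (|X| ≥ 2), and suppose there is a fixed-point-free permutation π of M such that every fixed point δ of σ satisfies: δ(k) is determined by δ(π(k)) for each k ∈ M (i.e., there are functions f_k : X → X with δ(k) = f_k(δ(π(k))) for every fixed point δ). Then the proportion of fixed points of σ in Y is at most |X|^{-m/2}. -/
/-!
A solution of `δ k = f k (δ (π k))` is determined on each cycle of `π` by its value at a single
point of that cycle, since the recurrence propagates that value backwards along the cycle. So the
solutions inject into the functions from the set of cycles to `X`. When `π` has no fixed points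
every cycle has at least two elements, so there are at most `|M| / 2` cycles.
-/

namespace Equiv.Perm

variable {M X : Type*}

theorem eq_of_eq_at_pow_apply (π : Perm M) (f : M → X → X) {δ δ' : M → X}
    (hδ : ∀ k, δ k = f k (δ (π k))) (hδ' : ∀ k, δ' k = f k (δ' (π k))) :
    ∀ (n : ℕ) {x : M}, δ ((π ^ n) x) = δ' ((π ^ n) x) → δ x = δ' x
  | 0, _, h => h
  | n + 1, x, h => by
    have hπx : δ (π x) = δ' (π x) :=
      eq_of_eq_at_pow_apply π f hδ hδ' n (by rwa [pow_succ, Perm.mul_apply] at h)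
    rw [hδ, hδ', hπx]

theorem eq_of_sameCycle_of_eq [Finite M] (π : Perm M) (f : M → X → X) {δ δ' : M → X}
    (hδ : ∀ k, δ k = f k (δ (π k))) (hδ' : ∀ k, δ' k = f k (δ' (π k))) {x y : M}
    (hxy : π.SameCycle x y) (h : δ y = δ' y) : δ x = δ' x := by
  obtain ⟨n, -, -, rfl⟩ := hxy.exists_nat_pow_eq
  exact eq_of_eq_at_pow_apply π f hδ hδ' n h

theorem card_solutions_le_pow_card_cycles [Finite M] [Finite X] (π : Perm M) (f : M → X → X) :
    Nat.card {δ : M → X // ∀ k, δ k = f k (δ (π k))} ≤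
      Nat.card X ^ Nat.card (Quotient (SameCycle.setoid π)) := by
  rw [← Nat.card_fun]
  refine Nat.card_le_card_of_injective (fun δ q => δ.1 q.out) fun δ δ' h => ?_
  ext k
  have hk : π.SameCycle k (Quotient.mk (SameCycle.setoid π) k).out :=
    (Quotient.mk_out (s := SameCycle.setoid π) k).symm
  exact eq_of_sameCycle_of_eq π f δ.2 δ'.2 hk (congrFun h _)

theorem two_mul_card_cycles_le [Finite M] {π : Perm M} (hπ : ∀ k, π k ≠ k) :
    2 * Nat.card (Quotient (SameCycle.setoid π)) ≤ Nat.card M := by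
  let Q := Quotient (SameCycle.setoid π)
  have hπout (q : Q) : (Quotient.mk _ (π q.out) : Q) = q :=
    (Quotient.sound (sameCycle_apply_left.mpr (SameCycle.refl π q.out))).trans q.out_eq
  -- each cycle contributes the two distinct points `q.out` and `π q.out`
  have hinj : Function.Injective
      (Sum.elim (fun q : Q => Quotient.out q) fun q : Q => π (Quotient.out q)) := by
    have hmixed (q q' : Q) (h : Quotient.out q = π (Quotient.out q')) : False := by
      have hqq' : q = q' := by rw [← Quotient.out_eq q, h, hπout]
      exact hπ _ (hqq' ▸ h).symm
    rintro (q | q) (q' | q') h <;> simp only [Sum.elim_inl, Sum.elim_inr] at h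
    · rw [Quotient.out_inj.mp h]
    · exact (hmixed q q' h).elim
    · exact (hmixed q' q h.symm).elim
    · rw [Quotient.out_inj.mp (π.injective h)]
  have := Nat.card_le_card_of_injective _ hinj
  rwa [Nat.card_sum, ← two_mul] at this

theorem card_solutions_le_pow_half [Finite M] [Finite X] [Nonempty X] {π : Perm M}
    (hπ : ∀ k, π k ≠ k) (f : M → X → X) :
    Nat.card {δ : M → X // ∀ k, δ k = f k (δ (π k))} ≤ Nat.card X ^ (Nat.card M / 2) :=
  (card_solutions_le_pow_card_cycles π f).trans <| Nat.pow_le_pow_right Nat.card_pos <|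
    (Nat.le_div_iff_mul_le two_pos).mpr ((mul_comm _ _).trans_le (two_mul_card_cycles_le hπ))

end Equiv.Perm

theorem stmt_18_general {M X : Type*} [Fintype M] [DecidableEq M] [Fintype X] [DecidableEq X]
    (hX : 2 ≤ Fintype.card X)
    (σ : Equiv.Perm (M → X)) (π : Equiv.Perm M) (hπ : ∀ k : M, π k ≠ k)
    (f : M → X → X)
    (hfix : ∀ δ : M → X, σ δ = δ → ∀ k : M, δ k = f k (δ (π k))) :
    ((Finset.univ.filter fun δ : M → X => σ δ = δ).card : ℝ) /
        (Fintype.card X : ℝ) ^ (Fintype.card M) ≤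
      (Fintype.card X : ℝ) ^ (-(Fintype.card M : ℝ) / 2) := by
  have : Nonempty X := Fintype.card_pos_iff.mp (by omega)
  have hcard : (Finset.univ.filter fun δ : M → X => σ δ = δ).card ≤
      Fintype.card X ^ (Fintype.card M / 2) := by
    rw [← Fintype.card_subtype]
    calc _ ≤ Fintype.card {δ : M → X // ∀ k, δ k = f k (δ (π k))} :=
          Fintype.card_subtype_mono _ _ hfix
      _ ≤ _ := by
          simpa only [Nat.card_eq_fintype_card] using Equiv.Perm.card_solutions_le_pow_half hπ f
  have hX1 : (1 : ℝ) ≤ Fintype.card X := by exact_mod_cast hX.trans' one_le_two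
  rw [div_le_iff₀ (by positivity), ← Real.rpow_natCast _ (Fintype.card M),
    ← Real.rpow_add (by positivity)]
  calc ((Finset.univ.filter fun δ : M → X => σ δ = δ).card : ℝ)
      ≤ (Fintype.card X : ℝ) ^ ((Fintype.card M / 2 : ℕ) : ℝ) := by
        rw [Real.rpow_natCast]; exact_mod_cast hcard
    _ ≤ (Fintype.card X : ℝ) ^ (-(Fintype.card M : ℝ) / 2 + Fintype.card M) := by
        refine Real.rpow_le_rpow_of_exponent_le hX1 ?_
        linarith [Nat.cast_div_le (m := Fintype.card M) (n := 2) (α := ℝ)]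

theorem stmt_18 {M X : Type*} [Fintype M] [DecidableEq M] [Fintype X] [DecidableEq X]
    (hm : 1 ≤ Fintype.card M) (hX : 2 ≤ Fintype.card X)
    (σ : Equiv.Perm (M → X)) (π : Equiv.Perm M) (hπ : ∀ k : M, π k ≠ k)
    (f : M → X → X)
    (hfix : ∀ δ : M → X, σ δ = δ → ∀ k : M, δ k = f k (δ (π k))) :
    ((Finset.univ.filter fun δ : M → X => σ δ = δ).card : ℝ) /
        (Fintype.card X : ℝ) ^ (Fintype.card M) ≤
      (Fintype.card X : ℝ) ^ (-(Fintype.card M : ℝ) / 2) :=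
  stmt_18_general hX σ π hπ f hfix
end
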